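/- Let G be a finite simple graph with m edges in which every vertex has positive degree, and let i and j be adjacent marked vertices with equal degree d = deg(i) = deg(j), with marked set M = {i,j}. Let ψ(0) be the uniform state, ψ(0)(e) = 1/√(2m) for every dart e, and ψ(t) = (S∘C∘Q)^t ψ(0). Then for every t ≥ 0, the probability of finding a marked vertex p_M(t) = Σ_{e : e.fst ∈ M} |ψ(t)(e)|² satisfies p_M(t) ≤ (1/m)·(2√((d−1)d³) + d(2d−1)); in particular p_M = O(d²/m). -/

import Mathlib

/-!
Let `c = 1/√(2m)` and `d = deg i = deg j`. The state that is `c` on every dart except the two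
darts of the edge `ij`, where it is `-(d - 1)c`, is fixed by `S ∘ C ∘ Q`: at an unmarked vertex
the coin sees a constant vector, and at `i` or `j` the amplitudes sum to zero, so the coin merely
undoes the sign flip of the query. The uniform state is this fixed state plus a correction
supported on the two darts of `ij`, of squared norm `2d²c²`, which the unitary walk preserves.
Since the fixed state has marked probability `2d(d - 1)c²`, Minkowski's inequality on the marked
darts gives `p_M(t) ≤ (√(2d(d - 1)) c + √2 d c)²`, which is the bound.
-/

namespace GraphWalk

variable {V : Type*}

/-- The flip-flop shift operator `S` on the darts of a simple graph:
`(Sψ)(e) = ψ(e.symm)`. -/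
noncomputable def shift (G : SimpleGraph V) (ψ : G.Dart → ℂ) : G.Dart → ℂ :=
  fun e => ψ e.symm

/-- The Grover coin `C`:
`(Cψ)(e) = (2/deg(e.fst)) Σ_{e' : e'.fst = e.fst} ψ(e') − ψ(e)`. -/
noncomputable def coin [Fintype V] [DecidableEq V] (G : SimpleGraph V)
    [DecidableRel G.Adj] (ψ : G.Dart → ℂ) : G.Dart → ℂ :=
  fun e => (2 / (G.degree e.fst : ℂ)) *
      (∑ e' ∈ Finset.univ.filter (fun e' : G.Dart => e'.fst = e.fst), ψ e') - ψ e

/-- The query `Q`, flipping the sign of all amplitudes at marked vertices. -/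
noncomputable def query [DecidableEq V] (G : SimpleGraph V) (M : Finset V)
    (ψ : G.Dart → ℂ) : G.Dart → ℂ :=
  fun e => if e.fst ∈ M then -ψ e else ψ e

/-- One step of the search algorithm, `U' = S ∘ C ∘ Q`. -/
noncomputable def step [Fintype V] [DecidableEq V] (G : SimpleGraph V)
    [DecidableRel G.Adj] (M : Finset V) (ψ : G.Dart → ℂ) : G.Dart → ℂ :=
  shift G (coin G (query G M ψ))

/-- One step of the quantum walk without query, `U = S ∘ C`. -/
noncomputable def walk [Fintype V] [DecidableEq V] (G : SimpleGraph V)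
    [DecidableRel G.Adj] (ψ : G.Dart → ℂ) : G.Dart → ℂ :=
  shift G (coin G ψ)

end GraphWalk

open Finset

theorem sum_norm_sq_grover_diffusion {ι E : Type*} [NormedAddCommGroup E] [InnerProductSpace ℝ E]
    (s : Finset ι) (a : ι → E) :
    ∑ i ∈ s, ‖(2 / #s : ℝ) • ∑ j ∈ s, a j - a i‖ ^ 2 = ∑ i ∈ s, ‖a i‖ ^ 2 := by
  rcases s.eq_empty_or_nonempty with rfl | hs
  · simp
  have hn : (#s : ℝ) ≠ 0 := by exact_mod_cast hs.card_pos.ne'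
  set S := ∑ j ∈ s, a j
  have hinner : ∑ i ∈ s, inner ℝ ((2 / #s : ℝ) • S) (a i) = (2 / #s : ℝ) * ‖S‖ ^ 2 := by
    rw [← inner_sum, real_inner_smul_left, real_inner_self_eq_norm_sq]
  simp_rw [norm_sub_sq_real, sum_add_distrib, sum_sub_distrib, ← mul_sum, hinner, sum_const,
    nsmul_eq_mul, norm_smul, mul_pow, Real.norm_eq_abs, sq_abs]
  field_simp
  ring

theorem sum_norm_add_sq_le {ι E : Type*} [SeminormedAddCommGroup E] (s : Finset ι)
    (a b : ι → E) :
    ∑ i ∈ s, ‖a i + b i‖ ^ 2 ≤ (√(∑ i ∈ s, ‖a i‖ ^ 2) + √(∑ i ∈ s, ‖b i‖ ^ 2)) ^ 2 :=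
  calc ∑ i ∈ s, ‖a i + b i‖ ^ 2 ≤ ∑ i ∈ s, (‖a i‖ + ‖b i‖) ^ 2 :=
        sum_le_sum fun i _ => pow_le_pow_left₀ (norm_nonneg _) (norm_add_le _ _) 2
    _ = ∑ i ∈ s, ‖a i‖ ^ 2 + ∑ i ∈ s, ‖b i‖ ^ 2 + 2 * ∑ i ∈ s, ‖a i‖ * ‖b i‖ := by
        simp only [add_sq, sum_add_distrib, mul_sum]
        ring_nf
    _ ≤ ∑ i ∈ s, ‖a i‖ ^ 2 + ∑ i ∈ s, ‖b i‖ ^ 2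
          + 2 * (√(∑ i ∈ s, ‖a i‖ ^ 2) * √(∑ i ∈ s, ‖b i‖ ^ 2)) := by
        gcongr
        exact Real.sum_mul_le_sqrt_mul_sqrt _ _ _
    _ = (√(∑ i ∈ s, ‖a i‖ ^ 2) + √(∑ i ∈ s, ‖b i‖ ^ 2)) ^ 2 := by
        rw [add_sq, Real.sq_sqrt (by positivity), Real.sq_sqrt (by positivity)]
        ring

theorem sqrt_mul_add_sqrt_mul_sq {x y r : ℝ} (hx : 0 ≤ x) (hy : 0 ≤ y) (hr : 0 ≤ r) :
    (√(x * r) + √(y * r)) ^ 2 = r * (x + y + 2 * √(x * y)) := by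
  rw [add_sq, Real.sq_sqrt (by positivity), Real.sq_sqrt (by positivity), mul_assoc 2,
    ← Real.sqrt_mul (by positivity), show x * r * (y * r) = x * y * r ^ 2 by ring,
    Real.sqrt_mul (by positivity), Real.sqrt_sq hr]
  ring

namespace GraphWalk

open SimpleGraph

variable {V : Type*} (G : SimpleGraph V)

theorem query_add [DecidableEq V] (M : Finset V) (ψ φ : G.Dart → ℂ) :
    query G M (ψ + φ) = query G M ψ + query G M φ := by
  funext e
  simp only [query, Pi.add_apply]
  split_ifs <;> ring

variable [Fintype V] [DecidableRel G.Adj]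

theorem sum_norm_sq_shift (ψ : G.Dart → ℂ) :
    ∑ e, ‖shift G ψ e‖ ^ 2 = ∑ e, ‖ψ e‖ ^ 2 :=
  Fintype.sum_bijective _ Dart.symm_involutive.bijective _ _ fun _ => rfl

variable [DecidableEq V]

theorem coin_add (ψ φ : G.Dart → ℂ) : coin G (ψ + φ) = coin G ψ + coin G φ := by
  funext e
  simp only [coin, Pi.add_apply, sum_add_distrib]
  ring

theorem step_add (M : Finset V) (ψ φ : G.Dart → ℂ) :
    step G M (ψ + φ) = step G M ψ + step G M φ := by
  rw [step, query_add, coin_add]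
  rfl

theorem sum_norm_sq_query (M : Finset V) (ψ : G.Dart → ℂ) :
    ∑ e, ‖query G M ψ e‖ ^ 2 = ∑ e, ‖ψ e‖ ^ 2 := by
  refine sum_congr rfl fun e _ => ?_
  unfold query
  split_ifs <;> simp

theorem sum_norm_sq_coin (ψ : G.Dart → ℂ) :
    ∑ e, ‖coin G ψ e‖ ^ 2 = ∑ e, ‖ψ e‖ ^ 2 := by
  simp only [← sum_fiberwise univ (fun e : G.Dart => e.fst)]
  refine sum_congr rfl fun v _ => ?_
  rw [← sum_norm_sq_grover_diffusion _ ψ, dart_fst_fiber_card_eq_degree]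
  refine sum_congr rfl fun e he => ?_
  obtain rfl : e.fst = v := (mem_filter.1 he).2
  simp only [coin, Complex.real_smul]
  push_cast
  rfl

theorem sum_norm_sq_step (M : Finset V) (ψ : G.Dart → ℂ) :
    ∑ e, ‖step G M ψ e‖ ^ 2 = ∑ e, ‖ψ e‖ ^ 2 := by
  rw [step, sum_norm_sq_shift, sum_norm_sq_coin, sum_norm_sq_query]

theorem sum_norm_sq_iterate_step (M : Finset V) (ψ : G.Dart → ℂ) (t : ℕ) :
    ∑ e, ‖(step G M)^[t] ψ e‖ ^ 2 = ∑ e, ‖ψ e‖ ^ 2 := by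
  induction t with
  | zero => rfl
  | succ t ih => rw [Function.iterate_succ_apply', sum_norm_sq_step, ih]

variable {i j : V}

def fixedState (i j : V) (c : ℂ) : G.Dart → ℂ := fun e =>
  if e.edge = s(i, j) then -((G.degree i : ℂ) - 1) * c else c

def pairCorrection (i j : V) (c : ℂ) : G.Dart → ℂ := fun e =>
  if e.edge = s(i, j) then (G.degree i : ℂ) * c else 0

theorem fixedState_add_pairCorrection (c : ℂ) :
    fixedState G i j c + pairCorrection G i j c = fun _ => c := by
  funext e
  simp only [fixedState, pairCorrection, Pi.add_apply]
  split_ifs <;> ring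

theorem fixedState_comm (hd : G.degree i = G.degree j) (c : ℂ) :
    fixedState G i j c = fixedState G j i c := by
  funext e
  rw [fixedState, fixedState, Sym2.eq_swap, hd]

theorem fixedState_of_fst_ne (c : ℂ) {e : G.Dart} (hi : e.fst ≠ i) (hj : e.fst ≠ j) :
    fixedState G i j c e = c :=
  if_neg fun h => (dart_edge_eq_mk'_iff'.1 h).elim (fun h => hi h.1) fun h => hj h.1

theorem card_filter_fst_eq_and_edge_eq (hadj : G.Adj i j) :
    #{e : G.Dart | e.fst = i ∧ e.edge = s(i, j)} = 1 := by
  rw [card_eq_one]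
  refine ⟨⟨(i, j), hadj⟩, ?_⟩
  ext e
  obtain ⟨⟨a, b⟩, hab⟩ := e
  simp only [mem_filter, mem_univ, true_and, mem_singleton, dart_edge_eq_mk'_iff', Dart.ext_iff,
    Prod.mk.injEq]
  constructor
  · rintro ⟨rfl, ⟨-, rfl⟩ | ⟨rfl, -⟩⟩
    · exact ⟨rfl, rfl⟩
    · exact (G.irrefl hadj).elim
  · rintro ⟨rfl, rfl⟩
    exact ⟨rfl, .inl ⟨rfl, rfl⟩⟩

theorem sum_fst_eq_ite_edge_eq {R : Type*} [CommRing R] (hadj : G.Adj i j) (a b : R) :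
    ∑ e ∈ univ.filter (fun e : G.Dart => e.fst = i), (if e.edge = s(i, j) then a else b)
      = a + ((G.degree i : R) - 1) * b := by
  have hcard := card_filter_add_card_filter_not (s := univ.filter (fun e : G.Dart => e.fst = i))
    (fun e : G.Dart => e.edge = s(i, j))
  rw [filter_filter, card_filter_fst_eq_and_edge_eq G hadj, dart_fst_fiber_card_eq_degree] at hcard
  rw [sum_ite, sum_const, sum_const, filter_filter, card_filter_fst_eq_and_edge_eq G hadj, ← hcard]
  push_cast
  simp only [one_smul, nsmul_eq_mul]
  ring

theorem sum_fst_eq_fixedState_eq_zero (hadj : G.Adj i j) (c : ℂ) :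
    ∑ e ∈ univ.filter (fun e : G.Dart => e.fst = i), fixedState G i j c e = 0 := by
  simp only [fixedState]
  rw [sum_fst_eq_ite_edge_eq G hadj]
  ring

theorem coin_query_fixedState (hadj : G.Adj i j) (hd : G.degree i = G.degree j) (c : ℂ) :
    coin G (query G {i, j} (fixedState G i j c)) = fixedState G i j c := by
  funext e
  by_cases hm : e.fst ∈ ({i, j} : Finset V)
  · have hsum :
        ∑ e' ∈ univ.filter (fun e' : G.Dart => e'.fst = e.fst), fixedState G i j c e' = 0 := by
      rcases mem_insert.1 hm with h | h
      · rw [h]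
        exact sum_fst_eq_fixedState_eq_zero G hadj c
      · rw [mem_singleton.1 h, fixedState_comm G hd]
        exact sum_fst_eq_fixedState_eq_zero G hadj.symm c
    have hquery : ∀ e' ∈ univ.filter (fun e' : G.Dart => e'.fst = e.fst),
        query G {i, j} (fixedState G i j c) e' = -fixedState G i j c e' := fun e' he' => by
      rw [query, (mem_filter.1 he').2, if_pos hm]
    rw [coin, sum_congr rfl hquery, sum_neg_distrib, hsum, query, if_pos hm]
    ring
  · simp only [mem_insert, mem_singleton, not_or] at hm
    have hquery : ∀ e' ∈ univ.filter (fun e' : G.Dart => e'.fst = e.fst),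
        query G {i, j} (fixedState G i j c) e' = c := fun e' he' => by
      obtain ⟨-, h⟩ := mem_filter.1 he'
      rw [query, if_neg (by simpa [h] using hm), fixedState_of_fst_ne G c (h ▸ hm.1) (h ▸ hm.2)]
    have hdeg : (G.degree e.fst : ℂ) ≠ 0 := by
      exact_mod_cast ((degree_pos_iff_exists_adj G _).2 ⟨_, e.adj⟩).ne'
    rw [coin, sum_congr rfl hquery, sum_const, dart_fst_fiber_card_eq_degree, query,
      if_neg (by simpa using hm), fixedState_of_fst_ne G c hm.1 hm.2]
    field_simp
    ring

theorem step_fixedState (hadj : G.Adj i j) (hd : G.degree i = G.degree j) (c : ℂ) :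
    step G {i, j} (fixedState G i j c) = fixedState G i j c := by
  funext e
  rw [step, shift, coin_query_fixedState G hadj hd]
  simp only [fixedState, Dart.edge_symm]

theorem iterate_step_fixedState_add (hadj : G.Adj i j) (hd : G.degree i = G.degree j) (c : ℂ)
    (ψ : G.Dart → ℂ) (t : ℕ) :
    (step G {i, j})^[t] (fixedState G i j c + ψ) = fixedState G i j c + (step G {i, j})^[t] ψ :=
  Function.Commute.iterate_left (fun ψ => by rw [step_add, step_fixedState G hadj hd]) t ψ

theorem sum_norm_sq_pairCorrection (hadj : G.Adj i j) (c : ℂ) :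
    ∑ e, ‖pairCorrection G i j c e‖ ^ 2 = 2 * (G.degree i : ℝ) ^ 2 * ‖c‖ ^ 2 := by
  simp only [pairCorrection, apply_ite (fun z : ℂ => ‖z‖ ^ 2)]
  rw [sum_ite, sum_const, sum_const, dart_edge_fiber_card G _ hadj]
  simp only [norm_mul, RCLike.norm_natCast, nsmul_eq_mul, Nat.cast_ofNat, norm_zero,
    ne_eq, OfNat.ofNat_ne_zero, not_false_eq_true, zero_pow]
  ring

theorem sum_fst_mem_pair {β : Type*} [AddCommMonoid β] (hij : i ≠ j) (f : G.Dart → β) :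
    ∑ e ∈ univ.filter (fun e : G.Dart => e.fst ∈ ({i, j} : Finset V)), f e
      = ∑ e ∈ univ.filter (fun e : G.Dart => e.fst = i), f e
        + ∑ e ∈ univ.filter (fun e : G.Dart => e.fst = j), f e := by
  simp only [mem_insert, mem_singleton, filter_or]
  exact sum_union (disjoint_filter.2 fun e _ hi hj => hij (hi.symm.trans hj))

theorem sum_fst_eq_norm_sq_fixedState (hadj : G.Adj i j) (c : ℂ) :
    ∑ e ∈ univ.filter (fun e : G.Dart => e.fst = i), ‖fixedState G i j c e‖ ^ 2
      = (G.degree i : ℝ) * (G.degree i - 1) * ‖c‖ ^ 2 := by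
  simp only [fixedState, apply_ite (fun z : ℂ => ‖z‖ ^ 2)]
  rw [sum_fst_eq_ite_edge_eq G hadj, norm_mul, norm_neg, mul_pow]
  have hnorm : ‖(G.degree i : ℂ) - 1‖ ^ 2 = ((G.degree i : ℝ) - 1) ^ 2 := by
    rw [← Complex.ofReal_natCast, ← Complex.ofReal_one, ← Complex.ofReal_sub, Complex.norm_real,
      Real.norm_eq_abs, sq_abs]
  rw [hnorm]
  ring

theorem sum_fst_mem_pair_norm_sq_fixedState (hadj : G.Adj i j) (hd : G.degree i = G.degree j)
    (c : ℂ) :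
    ∑ e ∈ univ.filter (fun e : G.Dart => e.fst ∈ ({i, j} : Finset V)), ‖fixedState G i j c e‖ ^ 2
      = 2 * ((G.degree i : ℝ) * (G.degree i - 1)) * ‖c‖ ^ 2 := by
  rw [sum_fst_mem_pair G hadj.ne, sum_fst_eq_norm_sq_fixedState G hadj, fixedState_comm G hd,
    sum_fst_eq_norm_sq_fixedState G hadj.symm, ← hd]
  ring

end GraphWalk

open GraphWalk

theorem two_adjacent_marked_prob_bound_general {V : Type*} [Fintype V] [DecidableEq V]
    (G : SimpleGraph V) [DecidableRel G.Adj]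
    (i j : V) (hadj : G.Adj i j) (hd : G.degree i = G.degree j) :
    ∀ t : ℕ,
      ∑ e ∈ Finset.univ.filter (fun e : G.Dart => e.fst ∈ ({i, j} : Finset V)),
        ‖(GraphWalk.step G {i, j})^[t]
            (fun _ => ((1 / Real.sqrt (2 * G.edgeFinset.card) : ℝ) : ℂ)) e‖ ^ 2
      ≤ (1 / (G.edgeFinset.card : ℝ)) *
          (2 * Real.sqrt (((G.degree i : ℝ) - 1) * (G.degree i : ℝ) ^ 3) +
            (G.degree i : ℝ) * (2 * (G.degree i : ℝ) - 1)) := by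
  intro t
  set m : ℝ := (G.edgeFinset.card : ℝ)
  set d : ℝ := (G.degree i : ℝ)
  set c : ℂ := ((1 / √(2 * m) : ℝ) : ℂ)
  have hm : 0 < m := by
    simpa [m] using Finset.card_pos.2 ⟨s(i, j), SimpleGraph.mem_edgeFinset.2 hadj⟩
  have hd1 : 1 ≤ d :=
    Nat.one_le_cast.2 ((SimpleGraph.degree_pos_iff_exists_adj G i).2 ⟨j, hadj⟩)
  have hc : 2 * ‖c‖ ^ 2 = 1 / m := by
    rw [Complex.norm_real, Real.norm_eq_abs, sq_abs, div_pow, Real.sq_sqrt (by positivity)]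
    field_simp
  have hfixed : ∑ e ∈ univ.filter (fun e : G.Dart => e.fst ∈ ({i, j} : Finset V)),
      ‖fixedState G i j c e‖ ^ 2 = d * (d - 1) * (1 / m) := by
    rw [sum_fst_mem_pair_norm_sq_fixedState G hadj hd, ← hc]
    ring
  have hcorr : ∑ e ∈ univ.filter (fun e : G.Dart => e.fst ∈ ({i, j} : Finset V)),
      ‖(step G {i, j})^[t] (pairCorrection G i j c) e‖ ^ 2 ≤ d ^ 2 * (1 / m) :=
    calc _ ≤ ∑ e, ‖(step G {i, j})^[t] (pairCorrection G i j c) e‖ ^ 2 :=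
          sum_le_sum_of_subset_of_nonneg (subset_univ _) fun _ _ _ => by positivity
      _ = _ := by rw [sum_norm_sq_iterate_step, sum_norm_sq_pairCorrection G hadj, ← hc]; ring
  rw [← fixedState_add_pairCorrection G c, iterate_step_fixedState_add G hadj hd]
  calc _ ≤ _ := sum_norm_add_sq_le _ _ _
    _ ≤ (√(d * (d - 1) * (1 / m)) + √(d ^ 2 * (1 / m))) ^ 2 := by
        rw [hfixed]
        gcongr
    _ = _ := by
        have hd1' : 0 ≤ d - 1 := by linarith
        rw [sqrt_mul_add_sqrt_mul_sq (by positivity) (by positivity) (by positivity),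
          show d * (d - 1) * d ^ 2 = (d - 1) * d ^ 3 by ring]
        ring

/-- Let `i` and `j` be adjacent marked vertices of equal degree `d` in a finite simple
graph with `m` edges in which every vertex has positive degree. Starting from the
uniform state `ψ₀(e) = 1/√(2m)`, the probability of finding a marked vertex after any
number of steps of the search algorithm is at most
`(1/m)·(2√((d−1)d³) + d(2d−1))`; in particular it is `O(d²/m)`. -/
theorem two_adjacent_marked_prob_bound {V : Type*} [Fintype V] [DecidableEq V]
    (G : SimpleGraph V) [DecidableRel G.Adj] (hdeg : ∀ v : V, 0 < G.degree v)
    (i j : V) (hadj : G.Adj i j) (hd : G.degree i = G.degree j) :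
    ∀ t : ℕ,
      ∑ e ∈ Finset.univ.filter (fun e : G.Dart => e.fst ∈ ({i, j} : Finset V)),
        ‖(GraphWalk.step G {i, j})^[t]
            (fun _ => ((1 / Real.sqrt (2 * G.edgeFinset.card) : ℝ) : ℂ)) e‖ ^ 2
      ≤ (1 / (G.edgeFinset.card : ℝ)) *
          (2 * Real.sqrt (((G.degree i : ℝ) - 1) * (G.degree i : ℝ) ^ 3) +
            (G.degree i : ℝ) * (2 * (G.degree i : ℝ) - 1)) :=
  two_adjacent_marked_prob_bound_general G i j hadj hd
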